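/- Let S be a finite shapeset all of whose shapes are potatoes. Then the set of scaling factors λ > 0 such that either some shape of λ·S (the set of shapes of S rescaled by λ) has two distinct maximal horizontal boundary segments whose heights differ by a nonzero integer, or two distinct maximal vertical boundary segments whose abscissas differ by a nonzero integer, or some shape of λ·S has diameter equal to an integer, is countable. In particular, there exist arbitrarily large λ > 0 avoiding all these conditions and such that, in addition, every shape of λ·S contains a translate of the closed unit square in its interior. -/

import Mathlib

/-!
The one nontrivial input is that a shape has nonempty interior: invariance of domain for a
closed disk in the plane. For `f` continuous and injective on the closed unit disk, the loop
`θ ↦ f(e^{iθ}) - f(0)` is homotopic, through `f(e^{iθ}) - f(-u e^{iθ})`, to an odd loop, whose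
winding number is odd, hence nonzero (Borsuk). A point `z` near `f 0` missing from the image
would make that loop homotopic to `θ ↦ f(e^{iθ}) - z`, which contracts through the disk to a
constant. Winding numbers are read off continuous logarithms, which exist because `exp` is a
covering map of `ℂ \ {0}`.

So `λ • s` contains a unit square for all large `λ`. Every maximal segment of `λ • s` is `λ`
times one of the countably many maximal segments of `s`, so an integer level difference `n`
forces `λ = n / (y₁ - y₂)`, and an integer diameter forces `λ = n / diam s`: the bad scalings
are countable, and their complement is dense.
-/

open Metric Set

noncomputable section

/-- Points of the plane. Note that the product norm on `ℝ × ℝ` is the sup-norm. -/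
abbrev Pt := ℝ × ℝ

/-- A "shape candidate" is just a set of points of the plane. -/
abbrev GShape := Set Pt

/-- Translate of a set of points by `v`. -/
def shTranslate (v : Pt) (s : GShape) : GShape := (fun p => p + v) '' s

/-- `t` is a translate of `s`. -/
def IsTranslateOf (t s : GShape) : Prop := ∃ v : Pt, t = shTranslate v s

/-- A shape: a compact subset of the plane homeomorphic to the closed unit disk. -/
def IsShape (s : GShape) : Prop :=
  IsCompact s ∧ Nonempty (s ≃ₜ (Metric.closedBall (0 : EuclideanSpace ℝ (Fin 2)) 1))

/-- An `S`-tiling: a set of translates of shapes of `S` covering the plane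
with pairwise disjoint interiors. -/
def IsTiling (S : Set GShape) (T : Set GShape) : Prop :=
  (∀ t ∈ T, ∃ s ∈ S, IsTranslateOf t s) ∧
  ⋃₀ T = Set.univ ∧
  T.Pairwise (fun t t' => interior t ∩ interior t' = ∅)

/-- A pattern over `S`: a finite set of translates of shapes of `S` with pairwise
disjoint interiors whose support is connected and simply connected. -/
def IsPattern (S : Set GShape) (P : Set GShape) : Prop :=
  P.Finite ∧
  (∀ t ∈ P, ∃ s ∈ S, IsTranslateOf t s) ∧
  P.Pairwise (fun t t' => interior t ∩ interior t' = ∅) ∧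
  IsConnected (⋃₀ P) ∧ SimplyConnectedSpace (⋃₀ P)

/-- Translate of a pattern (or a tiling). -/
def patTranslate (v : Pt) (P : Set GShape) : Set GShape := (shTranslate v) '' P

/-- `P` appears (up to translation) in the tiling `T`. -/
def AppearsIn (P T : Set GShape) : Prop := ∃ v : Pt, patTranslate v P ⊆ T

/-- `P` appears in some tiling of `X`. -/
def AppearsInSome (P : Set GShape) (X : Set (Set GShape)) : Prop := ∃ T ∈ X, AppearsIn P T

/-- A family of patterns is finite up to translation. -/
def FiniteUpToTranslation (Ps : Set (Set GShape)) : Prop :=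
  ∃ F : Set (Set GShape), F.Finite ∧ ∀ P ∈ Ps, ∃ Q ∈ F, ∃ v : Pt, P = patTranslate v Q

/-- Finite local complexity of a set `X` of tilings on the shapeset `S`:
for every compact `K`, there are finitely many patterns, up to translation,
appearing in tilings of `X` with support included in `K`. -/
def HasFLC (S : Set GShape) (X : Set (Set GShape)) : Prop :=
  ∀ K : Set Pt, IsCompact K →
    FiniteUpToTranslation {P | IsPattern S P ∧ AppearsInSome P X ∧ ⋃₀ P ⊆ K}

/-- A horizontal (nondegenerate, closed) segment. -/
def IsHorizSeg (s : Set Pt) : Prop := ∃ y a b : ℝ, a < b ∧ s = Set.Icc a b ×ˢ ({y} : Set ℝ)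

/-- A vertical (nondegenerate, closed) segment. -/
def IsVertSeg (s : Set Pt) : Prop := ∃ x a b : ℝ, a < b ∧ s = ({x} : Set ℝ) ×ˢ Set.Icc a b

/-- A maximal horizontal segment included in `B`. -/
def IsMaximalHorizSegOf (B s : Set Pt) : Prop :=
  IsHorizSeg s ∧ s ⊆ B ∧ ∀ s', IsHorizSeg s' → s' ⊆ B → s ⊆ s' → s' = s

/-- A maximal vertical segment included in `B`. -/
def IsMaximalVertSegOf (B s : Set Pt) : Prop :=
  IsVertSeg s ∧ s ⊆ B ∧ ∀ s', IsVertSeg s' → s' ⊆ B → s ⊆ s' → s' = s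

/-- A potato: a shape whose boundary contains at most countably many maximal
horizontal and maximal vertical segments. -/
def IsPotato (s : GShape) : Prop :=
  IsShape s ∧
  {seg : Set Pt | IsMaximalHorizSegOf (frontier s) seg}.Countable ∧
  {seg : Set Pt | IsMaximalVertSegOf (frontier s) seg}.Countable

/-- Rescaling of a shape by a factor `lam`. -/
def scaleShape (lam : ℝ) (s : GShape) : GShape := (fun p => lam • p) '' s

/-- The closed unit square. -/
def unitSquare : Set Pt := Set.Icc (0:ℝ) 1 ×ˢ Set.Icc (0:ℝ) 1

/-- The set of bad scaling factors for the shapeset `S`: factors `lam > 0` such that some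
shape of `lam • S` has two distinct maximal horizontal boundary segments whose heights
differ by a nonzero integer, or two distinct maximal vertical boundary segments whose
abscissas differ by a nonzero integer, or some shape of `lam • S` has integer diameter
(sup-norm). -/
def BadScalings (S : Set GShape) : Set ℝ :=
  {lam : ℝ | 0 < lam ∧
    ((∃ s ∈ S, ∃ g₁ g₂ : Set Pt,
        IsMaximalHorizSegOf (frontier (scaleShape lam s)) g₁ ∧
        IsMaximalHorizSegOf (frontier (scaleShape lam s)) g₂ ∧ g₁ ≠ g₂ ∧
        ∃ y₁ y₂ : ℝ, (∀ p ∈ g₁, Prod.snd p = y₁) ∧ (∀ p ∈ g₂, Prod.snd p = y₂) ∧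
          ∃ n : ℤ, n ≠ 0 ∧ y₁ - y₂ = (n : ℝ)) ∨
     (∃ s ∈ S, ∃ g₁ g₂ : Set Pt,
        IsMaximalVertSegOf (frontier (scaleShape lam s)) g₁ ∧
        IsMaximalVertSegOf (frontier (scaleShape lam s)) g₂ ∧ g₁ ≠ g₂ ∧
        ∃ x₁ x₂ : ℝ, (∀ p ∈ g₁, Prod.fst p = x₁) ∧ (∀ p ∈ g₂, Prod.fst p = x₂) ∧
          ∃ n : ℤ, n ≠ 0 ∧ x₁ - x₂ = (n : ℝ)) ∨
     (∃ s ∈ S, ∃ n : ℤ, Metric.diam (scaleShape lam s) = (n : ℝ)))}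


open Complex Function
open scoped Real Pointwise

section ContinuousLog

variable {X : Type*} [TopologicalSpace X]

theorem exists_continuous_exp_eq [SimplyConnectedSpace X] [LocallyPathConnectedSpace X]
    {f : X → ℂ} (hf : Continuous f) (hf0 : ∀ x, f x ≠ 0) :
    ∃ L : X → ℂ, Continuous L ∧ ∀ x, exp (L x) = f x := by
  obtain ⟨x₀⟩ : Nonempty X := inferInstance
  obtain ⟨L, ⟨-, hL⟩, -⟩ := isCoveringMapOn_exp.existsUnique_continuousMap_lifts ⟨f, hf⟩
    (a₀ := x₀) (exp_log (hf0 x₀)) hf0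
  exact ⟨L, L.continuous, congrFun hL⟩

theorem sub_eq_sub_of_exp_eq [PreconnectedSpace X] {L₁ L₂ : X → ℂ} (h₁ : Continuous L₁)
    (h₂ : Continuous L₂) (h : ∀ x, exp (L₁ x) = exp (L₂ x)) (x y : X) :
    L₁ x - L₂ x = L₁ y - L₂ y := by
  have := NormedSpace.discreteTopology_zmultiples (2 * π * I : ℂ)
  have hmem : ∀ x, L₁ x - L₂ x ∈ AddSubgroup.zmultiples (2 * π * I) := fun x => by
    obtain ⟨n, hn⟩ := exp_eq_one_iff.mp <| show exp (L₁ x - L₂ x) = 1 by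
      rw [Complex.exp_sub, h x, div_self (exp_ne_zero _)]
    exact ⟨n, by simp only [hn, zsmul_eq_mul]⟩
  exact congrArg Subtype.val <| PreconnectedSpace.constant ‹_›
    (f := fun x => (⟨L₁ x - L₂ x, hmem x⟩ : AddSubgroup.zmultiples (2 * π * I)))
    (by fun_prop)

end ContinuousLog

open scoped Classical in
/-- `2πi` times the winding number around `0` of the loop `γ` restricted to `[0, 2π]`,
provided `γ` has a continuous logarithm on `ℝ` (and `0` otherwise). -/
def logIncrement (γ : ℝ → ℂ) : ℂ :=
  if h : ∃ L : ℝ → ℂ, Continuous L ∧ ∀ t, exp (L t) = γ t then h.choose (2 * π) - h.choose 0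
  else 0

theorem logIncrement_eq {γ L : ℝ → ℂ} (hL : Continuous L) (h : ∀ t, exp (L t) = γ t) :
    logIncrement γ = L (2 * π) - L 0 := by
  have hex : ∃ L : ℝ → ℂ, Continuous L ∧ ∀ t, exp (L t) = γ t := ⟨L, hL, h⟩
  rw [logIncrement, dif_pos hex]
  linear_combination sub_eq_sub_of_exp_eq hex.choose_spec.1 hL
    (fun t => by rw [hex.choose_spec.2, h]) (2 * π) 0

theorem logIncrement_const {z : ℂ} (hz : z ≠ 0) : logIncrement (fun _ => z) = 0 := by
  rw [logIncrement_eq continuous_const (fun _ => exp_log hz), sub_self]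

theorem logIncrement_eq_of_homotopy {H : unitInterval → ℝ → ℂ} (hH : Continuous (uncurry H))
    (hH0 : ∀ u t, H u t ≠ 0) (hloop : ∀ u, H u (2 * π) = H u 0) :
    logIncrement (H 0) = logIncrement (H 1) := by
  obtain ⟨L, hL, hLH⟩ := exists_continuous_exp_eq
    (f := fun p : ℝ × ℝ => H (projIcc 0 1 zero_le_one p.1) p.2) (by fun_prop) (fun _ => hH0 _ _)
  have hslice (u : unitInterval) : logIncrement (H u) = L (u, 2 * π) - L (u, 0) :=
    logIncrement_eq (L := fun t => L (u, t)) (by fun_prop) (fun t => by rw [hLH, projIcc_val])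
  rw [hslice, hslice]
  exact sub_eq_sub_of_exp_eq (X := ℝ) (L₁ := fun u => L (u, 2 * π)) (L₂ := fun u => L (u, 0))
    (by fun_prop) (by fun_prop) (fun u => by rw [hLH, hLH, hloop]) _ _

theorem logIncrement_ne_zero_of_antiperiodic {γ : ℝ → ℂ} (hγ : Continuous γ)
    (hγ0 : ∀ t, γ t ≠ 0) (hodd : Antiperiodic γ π) : logIncrement γ ≠ 0 := by
  obtain ⟨L, hL, hLγ⟩ := exists_continuous_exp_eq hγ hγ0
  have hhalf : exp (L π - L 0) = -1 := by
    rw [Complex.exp_sub, hLγ, hLγ, ← zero_add π, hodd, neg_div_self (hγ0 0)]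
  -- `L (t + π) - L t` is an odd multiple of `πi`, hence constant, and the full turn is twice it
  have hconst := sub_eq_sub_of_exp_eq (L₁ := fun t => L (t + π)) (L₂ := fun t => L t + π * I)
    (by fun_prop) (by fun_prop)
    (fun t => by rw [Complex.exp_add, exp_pi_mul_I, hLγ, hLγ, hodd, mul_neg_one]) π 0
  rw [logIncrement_eq hL hLγ]
  intro h
  have : L π - L 0 = 0 := by
    simp only [zero_add, ← two_mul] at hconst
    linear_combination (1 / 2 : ℂ) * h - (1 / 2 : ℂ) * hconst
  rw [this, Complex.exp_zero] at hhalf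
  norm_num at hhalf

theorem logIncrement_sub_eq_of_norm_lt {γ : ℝ → ℂ} (hγ : Continuous γ)
    (hloop : γ (2 * π) = γ 0) {w z : ℂ} (h : ∀ θ, ‖z - w‖ < ‖γ θ - w‖) :
    logIncrement (fun θ => γ θ - w) = logIncrement (fun θ => γ θ - z) := by
  have := logIncrement_eq_of_homotopy (H := fun u θ => γ θ - (w + (u : ℂ) * (z - w)))
    (by fun_prop) (fun u θ hu => ?_) (fun u => by rw [hloop])
  · simpa using this
  have hθ := h θ
  rw [sub_eq_zero.mp hu, add_sub_cancel_left, norm_mul, Complex.norm_real, Real.norm_eq_abs,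
    abs_of_nonneg (unitInterval.nonneg u)] at hθ
  linarith [mul_le_of_le_one_left (norm_nonneg (z - w)) (unitInterval.le_one u)]

theorem unitInterval.abs_le_one (u : unitInterval) : |(u : ℝ)| ≤ 1 :=
  (abs_of_nonneg (unitInterval.nonneg u)).trans_le (unitInterval.le_one u)

section DiskMap

variable {f : ℂ → ℂ}

theorem circleMap_zero_mem_closedBall_one {R : ℝ} (hR : |R| ≤ 1) (θ : ℝ) :
    circleMap 0 R θ ∈ closedBall (0 : ℂ) 1 := by
  rwa [mem_closedBall_zero_iff, norm_circleMap_zero]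

theorem ContinuousOn.continuous_comp_circleMap {X : Type*} [TopologicalSpace X]
    (hf : ContinuousOn f (closedBall 0 1)) {R θ : X → ℝ} (hR : Continuous R) (hθ : Continuous θ)
    (hR1 : ∀ x, |R x| ≤ 1) : Continuous fun x => f (circleMap 0 (R x) (θ x)) :=
  hf.comp_continuous (by fun_prop) fun x => circleMap_zero_mem_closedBall_one (hR1 x) (θ x)

theorem logIncrement_comp_circleMap_sub_eq_zero (hf : ContinuousOn f (closedBall 0 1)) {z : ℂ}
    (hz : z ∉ f '' closedBall 0 1) : logIncrement (fun θ => f (circleMap 0 1 θ) - z) = 0 := by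
  have hfz {w} (hw : w ∈ closedBall (0 : ℂ) 1) : f w - z ≠ 0 :=
    sub_ne_zero.mpr fun h => hz ⟨w, hw, h⟩
  have := logIncrement_eq_of_homotopy (H := fun u θ => f (circleMap 0 u θ) - z)
    ((hf.continuous_comp_circleMap (R := fun p : unitInterval × ℝ => p.1) (θ := Prod.snd)
      (by fun_prop) (by fun_prop) fun p => unitInterval.abs_le_one p.1).sub continuous_const)
    (fun u θ => hfz (circleMap_zero_mem_closedBall_one (unitInterval.abs_le_one u) θ))
    (fun u => by rw [(periodic_circleMap 0 _).eq])
  simpa [circleMap_zero_radius, logIncrement_const (hfz (mem_closedBall_self zero_le_one))]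
    using this.symm

theorem logIncrement_comp_circleMap_sub_ne_zero (hf : ContinuousOn f (closedBall 0 1))
    (hinj : InjOn f (closedBall 0 1)) :
    logIncrement (fun θ => f (circleMap 0 1 θ) - f 0) ≠ 0 := by
  have hunit (u : unitInterval) : |-(u : ℝ)| ≤ 1 :=
    (abs_neg (u : ℝ)).trans_le (unitInterval.abs_le_one u)
  have hantipodal (u : unitInterval) (θ : ℝ) :
      f (circleMap 0 1 θ) - f (circleMap 0 (-u) θ) ≠ 0 := fun h => by
    have h1 := hinj (circleMap_zero_mem_closedBall_one (by simp) θ)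
      (circleMap_zero_mem_closedBall_one (hunit u) θ) (sub_eq_zero.mp h)
    simp only [circleMap_zero, mul_eq_mul_right_iff, exp_ne_zero, or_false] at h1
    have : (1 : ℝ) = -u := by exact_mod_cast h1
    linarith [unitInterval.nonneg u]
  -- the boundary loop around `f 0` is homotopic to the odd loop `f(ζ) - f(-ζ)`
  have := logIncrement_eq_of_homotopy
    (H := fun u θ => f (circleMap 0 1 θ) - f (circleMap 0 (-u) θ))
    ((hf.continuous_comp_circleMap continuous_const (by fun_prop) fun _ => by simp).sub
      (hf.continuous_comp_circleMap (R := fun p : unitInterval × ℝ => -p.1) (θ := Prod.snd)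
        (by fun_prop) (by fun_prop) fun p => hunit p.1))
    hantipodal (fun u => by simp only [(periodic_circleMap 0 _).eq])
  simp only [Set.Icc.coe_zero, neg_zero, circleMap_zero_radius, const_apply, Set.Icc.coe_one]
    at this
  rw [this]
  refine logIncrement_ne_zero_of_antiperiodic
    ((hf.continuous_comp_circleMap continuous_const continuous_id fun _ => by simp).sub
      (hf.continuous_comp_circleMap continuous_const continuous_id fun _ => by simp))
    (by simpa using hantipodal 1) fun θ => ?_
  rw [← circleMap_neg_radius, ← neg_neg (1 : ℝ), ← circleMap_neg_radius, neg_neg, neg_sub]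

theorem mem_interior_image_closedBall_of_injOn (hf : ContinuousOn f (closedBall 0 1))
    (hinj : InjOn f (closedBall 0 1)) : f 0 ∈ interior (f '' closedBall 0 1) := by
  have hf0 : f 0 ∉ f '' sphere 0 1 := by
    rintro ⟨w, hw, hfw⟩
    rw [hinj (sphere_subset_closedBall hw) (mem_closedBall_self zero_le_one) hfw] at hw
    simp at hw
  have hC : IsClosed (f '' sphere 0 1) :=
    ((isCompact_sphere 0 1).image_of_continuousOn (hf.mono sphere_subset_closedBall)).isClosed
  set r := infDist (f 0) (f '' sphere 0 1)
  have hr : 0 < r :=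
    (hC.notMem_iff_infDist_pos ((NormedSpace.sphere_nonempty.mpr zero_le_one).image f)).mp hf0
  refine mem_interior_iff_mem_nhds.mpr (Filter.mem_of_superset (ball_mem_nhds _ hr) fun z hz => ?_)
  by_contra hz'
  have hγ : Continuous fun θ => f (circleMap 0 1 θ) :=
    hf.continuous_comp_circleMap continuous_const continuous_id fun _ => by simp
  refine logIncrement_comp_circleMap_sub_ne_zero hf hinj ?_
  rw [logIncrement_sub_eq_of_norm_lt hγ (by rw [(periodic_circleMap 0 1).eq]) fun θ => ?_]
  · exact logIncrement_comp_circleMap_sub_eq_zero hf hz'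
  rw [← dist_eq_norm, ← dist_eq_norm, dist_comm (f _)]
  exact hz.trans_le (infDist_le_dist_of_mem (mem_image_of_mem f (by simp)))

end DiskMap

theorem interior_nonempty_of_homeomorph_closedBall {s : Set ℂ} (e : s ≃ₜ closedBall (0 : ℂ) 1) :
    (interior s).Nonempty := by
  set F : closedBall (0 : ℂ) 1 → ℂ := Subtype.val ∘ e.symm
  set f : ℂ → ℂ := extend Subtype.val F 0
  have hres : (closedBall (0 : ℂ) 1).domRestrict f = F :=
    funext fun x => Subtype.val_injective.extend_apply F 0 x
  have h := mem_interior_image_closedBall_of_injOn (f := f)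
    (continuousOn_iff_continuous_domRestrict.mpr (hres ▸ by fun_prop))
    (injOn_iff_injective.mpr (hres ▸ Subtype.val_injective.comp e.symm.injective))
  rw [← range_domRestrict, hres, range_comp, e.symm.range_coe, image_univ, Subtype.range_coe] at h
  exact ⟨_, h⟩

theorem IsShape.interior_nonempty {s : GShape} (hs : IsShape s) : (interior s).Nonempty := by
  obtain ⟨-, ⟨e⟩⟩ := hs
  let toC : Pt ≃ₜ ℂ := equivRealProdCLM.symm.toHomeomorph
  let κ : closedBall (0 : ℂ) 1 ≃ₜ closedBall (0 : EuclideanSpace ℝ (Fin 2)) 1 :=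
    orthonormalBasisOneI.repr.toHomeomorph.subtype fun z => by simp
  obtain ⟨z, hz⟩ := interior_nonempty_of_homeomorph_closedBall
    ((toC.image s).symm.trans (e.trans κ.symm))
  rw [← toC.image_interior] at hz
  obtain ⟨p, hp, -⟩ := hz
  exact ⟨p, hp⟩

theorem IsShape.diam_pos {s : GShape} (hs : IsShape s) : 0 < diam s := by
  obtain ⟨x, hx⟩ := hs.interior_nonempty
  rcases eq_singleton_or_nontrivial (interior_subset hx) with rfl | h
  · simp [interior_singleton] at hx
  · exact Metric.diam_pos h hs.1.isBounded

theorem scaleShape_eq_smul (c : ℝ) (s : GShape) : scaleShape c s = c • s := image_smul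

theorem frontier_smul₀ {α G₀ : Type*} [TopologicalSpace α] [GroupWithZero G₀] [MulAction G₀ α]
    [ContinuousConstSMul G₀ α] {c : G₀} (hc : c ≠ 0) (s : Set α) :
    frontier (c • s) = c • frontier s :=
  ((Homeomorph.smulOfNeZero c hc).image_frontier s).symm

theorem shTranslate_unitSquare_subset_closedBall (c : Pt) :
    shTranslate (c - (1 / 2, 1 / 2)) unitSquare ⊆ closedBall c (1 / 2) := by
  rintro _ ⟨q, ⟨⟨hq₁, hq₁'⟩, hq₂, hq₂'⟩, rfl⟩
  rw [mem_closedBall, dist_eq_norm, Prod.norm_def]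
  simp only [Prod.fst_sub, Prod.snd_sub, Prod.fst_add, Prod.snd_add, Real.norm_eq_abs]
  refine max_le (abs_le.mpr ⟨?_, ?_⟩) (abs_le.mpr ⟨?_, ?_⟩) <;> linarith

theorem eventually_exists_translate_unitSquare_subset {s : GShape} (hs : (interior s).Nonempty) :
    ∀ᶠ lam in Filter.atTop, ∃ v : Pt, shTranslate v unitSquare ⊆ interior (scaleShape lam s) := by
  obtain ⟨c, hc⟩ := hs
  obtain ⟨ρ, hρ, hball⟩ := Metric.isOpen_iff.mp isOpen_interior c hc
  filter_upwards [Filter.eventually_gt_atTop ρ⁻¹] with lam hlam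
  have hlam0 : 0 < lam := (inv_pos.mpr hρ).trans hlam
  refine ⟨lam • c - (1 / 2, 1 / 2), (shTranslate_unitSquare_subset_closedBall _).trans ?_⟩
  rw [scaleShape_eq_smul, interior_smul₀ hlam0.ne']
  refine (closedBall_subset_ball ?_).trans ((smul_ball hlam0.ne' c ρ).symm.subset.trans
    (smul_set_mono hball))
  rw [Real.norm_eq_abs, abs_of_pos hlam0]
  have := (inv_lt_iff_one_lt_mul₀ hρ).mp hlam
  linarith

section Segments

variable {B g : Set Pt} {c : ℝ}

theorem IsHorizSeg.nonempty (hg : IsHorizSeg g) : g.Nonempty := by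
  obtain ⟨y, a, b, hab, rfl⟩ := hg
  exact ⟨(a, y), left_mem_Icc.mpr hab.le, rfl⟩

theorem IsVertSeg.nonempty (hg : IsVertSeg g) : g.Nonempty := by
  obtain ⟨x, a, b, hab, rfl⟩ := hg
  exact ⟨(x, a), rfl, left_mem_Icc.mpr hab.le⟩

theorem IsHorizSeg.smul (hg : IsHorizSeg g) (hc : 0 < c) : IsHorizSeg (c • g) := by
  obtain ⟨y, a, b, hab, rfl⟩ := hg
  exact ⟨c * y, c * a, c * b, by gcongr, by
    rw [smul_set_prod, LinearOrderedField.smul_Icc hc, smul_set_singleton, smul_eq_mul]⟩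

theorem IsVertSeg.smul (hg : IsVertSeg g) (hc : 0 < c) : IsVertSeg (c • g) := by
  obtain ⟨x, a, b, hab, rfl⟩ := hg
  exact ⟨c * x, c * a, c * b, by gcongr, by
    rw [smul_set_prod, LinearOrderedField.smul_Icc hc, smul_set_singleton, smul_eq_mul]⟩

theorem maximal_smul_of_smul_closed {P : Set Pt → Prop}
    (hP : ∀ {c : ℝ} {g}, 0 < c → P g → P (c • g)) (hc : 0 < c)
    (h : P g ∧ g ⊆ B ∧ ∀ g', P g' → g' ⊆ B → g ⊆ g' → g' = g) :
    P (c • g) ∧ c • g ⊆ c • B ∧ ∀ g', P g' → g' ⊆ c • B → c • g ⊆ g' → g' = c • g := by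
  obtain ⟨hg, hgB, hmax⟩ := h
  refine ⟨hP hc hg, smul_set_mono hgB, fun g' hg' hg'B hgg' => ?_⟩
  rw [← hmax (c⁻¹ • g') (hP (inv_pos.mpr hc) hg') ((subset_smul_set_iff₀ hc.ne').mp hg'B)
    ((smul_set_subset_iff₀ hc.ne').mp hgg'), smul_inv_smul₀ hc.ne']

theorem IsMaximalHorizSegOf.smul (h : IsMaximalHorizSegOf B g) (hc : 0 < c) :
    IsMaximalHorizSegOf (c • B) (c • g) :=
  maximal_smul_of_smul_closed (fun hc hg => IsHorizSeg.smul hg hc) hc h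

theorem IsMaximalVertSegOf.smul (h : IsMaximalVertSegOf B g) (hc : 0 < c) :
    IsMaximalVertSegOf (c • B) (c • g) :=
  maximal_smul_of_smul_closed (fun hc hg => IsVertSeg.smul hg hc) hc h

theorem IsMaximalHorizSegOf.of_smul (h : IsMaximalHorizSegOf (c • B) g) (hc : 0 < c) :
    IsMaximalHorizSegOf B (c⁻¹ • g) := by
  simpa only [inv_smul_smul₀ hc.ne'] using h.smul (inv_pos.mpr hc)

theorem IsMaximalVertSegOf.of_smul (h : IsMaximalVertSegOf (c • B) g) (hc : 0 < c) :
    IsMaximalVertSegOf B (c⁻¹ • g) := by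
  simpa only [inv_smul_smul₀ hc.ne'] using h.smul (inv_pos.mpr hc)

end Segments

def IntegralLevelScalings (ℓ : Pt → ℝ) (A : Set (Set Pt)) : Set ℝ :=
  {lam | ∃ g₁ ∈ A, ∃ g₂ ∈ A, ∃ y₁ y₂ : ℝ, (∀ p ∈ lam • g₁, ℓ p = y₁) ∧ (∀ p ∈ lam • g₂, ℓ p = y₂) ∧
    ∃ n : ℤ, n ≠ 0 ∧ y₁ - y₂ = n}

theorem countable_integralLevelScalings {ℓ : Pt → ℝ} (hℓ : ∀ (c : ℝ) p, ℓ (c • p) = c * ℓ p)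
    {A : Set (Set Pt)} (hA : A.Countable) (hne : ∀ g ∈ A, g.Nonempty) :
    (IntegralLevelScalings ℓ A).Countable := by
  have := hA.to_subtype
  refine (countable_iUnion fun g₁ : A => countable_iUnion fun g₂ : A =>
    countable_range fun n : ℤ =>
      (n : ℝ) / (ℓ (hne g₁ g₁.2).some - ℓ (hne g₂ g₂.2).some)).mono ?_
  rintro lam ⟨g₁, hg₁, g₂, hg₂, y₁, y₂, hy₁, hy₂, n, hn, hy⟩
  simp only [mem_iUnion, mem_range]
  refine ⟨⟨g₁, hg₁⟩, ⟨g₂, hg₂⟩, n, ?_⟩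
  have h₁ := hy₁ _ (smul_mem_smul_set (hne g₁ hg₁).some_mem (a := lam))
  have h₂ := hy₂ _ (smul_mem_smul_set (hne g₂ hg₂).some_mem (a := lam))
  rw [hℓ] at h₁ h₂
  have hlam : lam * (ℓ (hne g₁ hg₁).some - ℓ (hne g₂ hg₂).some) = n := by
    rw [mul_sub, h₁, h₂, hy]
  rw [div_eq_iff (right_ne_zero_of_mul (hlam ▸ Int.cast_ne_zero.mpr hn)), hlam]

theorem badScalings_subset_biUnion (S : Set GShape) :
    BadScalings S ⊆ ⋃ s ∈ S, BadScalings {s} := by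
  rintro lam ⟨hlam, ⟨s, hs, h⟩ | ⟨s, hs, h⟩ | ⟨s, hs, h⟩⟩ <;> refine mem_biUnion hs ⟨hlam, ?_⟩
  exacts [Or.inl ⟨s, rfl, h⟩, Or.inr (Or.inl ⟨s, rfl, h⟩), Or.inr (Or.inr ⟨s, rfl, h⟩)]

theorem IsPotato.countable_badScalings {s : GShape} (hs : IsPotato s) :
    (BadScalings {s}).Countable := by
  refine ((countable_integralLevelScalings (ℓ := Prod.snd) (fun _ _ => rfl) hs.2.1
    fun _ hg => hg.1.nonempty).union ((countable_integralLevelScalings (ℓ := Prod.fst)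
    (fun _ _ => rfl) hs.2.2 fun _ hg => hg.1.nonempty).union
    (countable_range fun n : ℤ => (n : ℝ) / diam s))).mono ?_
  rintro lam ⟨hlam, ⟨_, rfl, g₁, g₂, hg₁, hg₂, -, y₁, y₂, hy₁, hy₂, hn⟩ |
    ⟨_, rfl, g₁, g₂, hg₁, hg₂, -, x₁, x₂, hx₁, hx₂, hn⟩ | ⟨_, rfl, n, hn⟩⟩
  · rw [scaleShape_eq_smul, frontier_smul₀ hlam.ne'] at hg₁ hg₂
    refine Or.inl ⟨_, hg₁.of_smul hlam, _, hg₂.of_smul hlam, y₁, y₂, ?_, ?_, hn⟩ <;>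
      rwa [smul_inv_smul₀ hlam.ne']
  · rw [scaleShape_eq_smul, frontier_smul₀ hlam.ne'] at hg₁ hg₂
    refine Or.inr (Or.inl ⟨_, hg₁.of_smul hlam, _, hg₂.of_smul hlam, x₁, x₂, ?_, ?_, hn⟩) <;>
      rwa [smul_inv_smul₀ hlam.ne']
  · rw [scaleShape_eq_smul, diam_smul₀, Real.norm_eq_abs, abs_of_pos hlam] at hn
    exact Or.inr (Or.inr ⟨n, by simp only [← hn, mul_div_cancel_right₀ _ hs.1.diam_pos.ne']⟩)

/-- For a finite shapeset of potatoes, the set of bad scaling factors is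
countable; in particular there are arbitrarily large good scaling factors `lam` such that
moreover every shape of `lam • S` contains a translate of the closed unit square in its
interior. -/
theorem bad_scalings_countable
    (S : Set GShape) (hSfin : S.Finite) (hSpot : ∀ s ∈ S, IsPotato s) :
    (BadScalings S).Countable ∧
    ∀ M : ℝ, ∃ lam : ℝ, M < lam ∧ 0 < lam ∧ lam ∉ BadScalings S ∧
      ∀ s ∈ S, ∃ v : Pt, shTranslate v unitSquare ⊆ interior (scaleShape lam s) := by
  have hcount : (BadScalings S).Countable :=
    (hSfin.countable.biUnion fun s hs => (hSpot s hs).countable_badScalings).mono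
      (badScalings_subset_biUnion S)
  refine ⟨hcount, fun M => ?_⟩
  have hsquares : ∀ᶠ lam in Filter.atTop, ∀ s ∈ S,
      ∃ v : Pt, shTranslate v unitSquare ⊆ interior (scaleShape lam s) :=
    (Filter.eventually_all_finite hSfin).mpr fun s hs =>
      eventually_exists_translate_unitSquare_subset (hSpot s hs).1.interior_nonempty
  obtain ⟨a, ha⟩ := Filter.eventually_atTop.mp
    (hsquares.and ((Filter.eventually_gt_atTop M).and (Filter.eventually_gt_atTop 0)))
  obtain ⟨lam, hgood, hlam, -⟩ := (hcount.dense_compl ℝ).exists_between (lt_add_one a)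
  exact ⟨lam, (ha lam hlam.le).2.1, (ha lam hlam.le).2.2, hgood, (ha lam hlam.le).1⟩
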